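/- In the polynomial ring ℚ(p)[X], substituting x₀ = 1, x₁ = p, x₂ = p², x₃ = p³ into the polynomial P(X) yields the factorization P(1, p, p², p³, X) = (1 − pX)(1 − p²X)(1 − p³X)(1 − p⁴X)(1 + (p + p² + p³ + p⁴)X + p⁵X²). Equivalently, 1 − (p⁸+p⁷+2p⁶+p⁵+2p⁴+p³+p²)X² + (p^{11}+2p^{10}+2p⁹+3p⁸+3p⁷+2p⁶+2p⁵+p⁴)X³ − (p^{13}+p^{12}+2p^{11}+p^{10}+2p⁹+p⁸+p⁷)X⁴ + p^{15}X⁶ equals that product. -/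
import Mathlib


/-! Setup: the rational function field `ℚ(p)`, realized as `RatFunc ℚ` with `p` the generator,
and the polynomial ring `ℚ(p)[X]`.  We substitute `x₀ = 1`, `x₁ = p`, `x₂ = p²`, `x₃ = p³`
into the polynomial `P(x₀,x₁,x₂,x₃,X)` (the degree homomorphism `ν` on the Hecke ring). -/

noncomputable section

/-- The indeterminate `p` of `ℚ(p)`. -/
def p : RatFunc ℚ := RatFunc.X

/-- The substituted values `x₁ = p`, `x₂ = p²`, `x₃ = p³` (as `x 0, x 1, x 2`). -/
def x (i : Fin 3) : RatFunc ℚ := p ^ ((i : ℕ) + 1)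

/-- The monomial symmetric polynomial `sym_{a,b,c}` (the sum of all *distinct* monomials
obtained from `x₁^a x₂^b x₃^c` by permuting the variables), evaluated at
`x₁ = p`, `x₂ = p²`, `x₃ = p³`. -/
def sym (a b c : ℕ) : RatFunc ℚ :=
  ∑ e ∈ Finset.univ.image (fun σ : Equiv.Perm (Fin 3) => (![a, b, c]) ∘ σ),
    ∏ j, x j ^ e j

lemma sym3 (a : ℕ) : sym a a a = p ^ (6 * a) := by
  have hall : ∀ j : Fin 3, (![a,a,a] : Fin 3 → ℕ) j = a := by intro j; fin_cases j <;> rfl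
  unfold sym
  rw [show (Finset.univ.image fun σ : Equiv.Perm (Fin 3) => (![a,a,a] : Fin 3 → ℕ) ∘ σ)
      = {![a,a,a]} from by
    apply Finset.eq_singleton_iff_unique_mem.2
    refine ⟨Finset.mem_image.2 ⟨1, Finset.mem_univ _, by ext i; simp [hall]⟩, ?_⟩
    intro f hf
    obtain ⟨σ, -, rfl⟩ := Finset.mem_image.1 hf
    ext i; simp [hall]]
  rw [Finset.sum_singleton]
  simp only [hall, Fin.prod_univ_three, x, Fin.val_zero, Fin.val_one, Fin.val_two]
  norm_num
  rw [← pow_mul, ← pow_mul, ← pow_add, ← pow_add]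
  congr 1; ring

lemma hs211 : sym 2 1 1 = p ^ 7 + p ^ 8 + p ^ 9 := by
  unfold sym
  rw [show (Finset.univ.image fun σ : Equiv.Perm (Fin 3) => (![2,1,1] : Fin 3 → ℕ) ∘ σ)
      = {![2,1,1], ![1,2,1], ![1,1,2]} from by decide]
  rw [Finset.sum_insert (by decide), Finset.sum_insert (by decide), Finset.sum_singleton]
  simp [Fin.prod_univ_three, x]
  ring

lemma hs110 : sym 1 1 0 = p ^ 3 + p ^ 4 + p ^ 5 := by
  unfold sym
  rw [show (Finset.univ.image fun σ : Equiv.Perm (Fin 3) => (![1,1,0] : Fin 3 → ℕ) ∘ σ)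
      = {![1,1,0], ![1,0,1], ![0,1,1]} from by decide]
  rw [Finset.sum_insert (by decide), Finset.sum_insert (by decide), Finset.sum_singleton]
  simp [Fin.prod_univ_three, x]
  ring

lemma hs221 : sym 2 2 1 = p ^ 9 + p ^ 10 + p ^ 11 := by
  unfold sym
  rw [show (Finset.univ.image fun σ : Equiv.Perm (Fin 3) => (![2,2,1] : Fin 3 → ℕ) ∘ σ)
      = {![2,2,1], ![2,1,2], ![1,2,2]} from by decide]
  rw [Finset.sum_insert (by decide), Finset.sum_insert (by decide), Finset.sum_singleton]
  simp [Fin.prod_univ_three, x]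
  ring

lemma hs322 : sym 3 2 2 = p ^ 13 + p ^ 14 + p ^ 15 := by
  unfold sym
  rw [show (Finset.univ.image fun σ : Equiv.Perm (Fin 3) => (![3,2,2] : Fin 3 → ℕ) ∘ σ)
      = {![3,2,2], ![2,3,2], ![2,2,3]} from by decide]
  rw [Finset.sum_insert (by decide), Finset.sum_insert (by decide), Finset.sum_singleton]
  simp [Fin.prod_univ_three, x]
  ring

open Polynomial in
set_option maxHeartbeats 1600000 in
/-- substituting `x₀ = 1, x₁ = p, x₂ = p², x₃ = p³` into `P(X)` yields the
factorization
`P_ν(X) = (1−pX)(1−p²X)(1−p³X)(1−p⁴X)(1+(p+p²+p³+p⁴)X+p⁵X²)`;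
equivalently, the explicitly expanded polynomial equals that product. -/
theorem P_nu_factorization :
    (1 - C (sym 2 1 1 / p + (p ^ 2 + p + 1) * sym 1 1 1 / p ^ 2 + sym 1 1 0 / p) * X ^ 2
      + C (((p + 1) / p ^ 2) * (sym 2 2 2 + sym 2 2 1 + sym 2 1 1 + sym 1 1 1)) * X ^ 3
      - C (sym 3 2 2 / p ^ 2 + (p ^ 2 + p + 1) * sym 2 2 2 / p ^ 3 + sym 2 2 1 / p ^ 2) * X ^ 4
      + C (sym 3 3 3 / p ^ 3) * X ^ 6 : (RatFunc ℚ)[X])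
    = (1 - C p * X) * (1 - C (p ^ 2) * X) * (1 - C (p ^ 3) * X) * (1 - C (p ^ 4) * X)
        * (1 + C (p + p ^ 2 + p ^ 3 + p ^ 4) * X + C (p ^ 5) * X ^ 2)
    ∧ (1 - C (p ^ 8 + p ^ 7 + 2 * p ^ 6 + p ^ 5 + 2 * p ^ 4 + p ^ 3 + p ^ 2) * X ^ 2
      + C (p ^ 11 + 2 * p ^ 10 + 2 * p ^ 9 + 3 * p ^ 8 + 3 * p ^ 7 + 2 * p ^ 6
          + 2 * p ^ 5 + p ^ 4) * X ^ 3
      - C (p ^ 13 + p ^ 12 + 2 * p ^ 11 + p ^ 10 + 2 * p ^ 9 + p ^ 8 + p ^ 7) * X ^ 4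
      + C (p ^ 15) * X ^ 6 : (RatFunc ℚ)[X])
    = (1 - C p * X) * (1 - C (p ^ 2) * X) * (1 - C (p ^ 3) * X) * (1 - C (p ^ 4) * X)
        * (1 + C (p + p ^ 2 + p ^ 3 + p ^ 4) * X + C (p ^ 5) * X ^ 2) := by
  have hp : p ≠ 0 := RatFunc.X_ne_zero
  have key : (1 - C (p ^ 8 + p ^ 7 + 2 * p ^ 6 + p ^ 5 + 2 * p ^ 4 + p ^ 3 + p ^ 2) * X ^ 2
      + C (p ^ 11 + 2 * p ^ 10 + 2 * p ^ 9 + 3 * p ^ 8 + 3 * p ^ 7 + 2 * p ^ 6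
          + 2 * p ^ 5 + p ^ 4) * X ^ 3
      - C (p ^ 13 + p ^ 12 + 2 * p ^ 11 + p ^ 10 + 2 * p ^ 9 + p ^ 8 + p ^ 7) * X ^ 4
      + C (p ^ 15) * X ^ 6 : (RatFunc ℚ)[X])
    = (1 - C p * X) * (1 - C (p ^ 2) * X) * (1 - C (p ^ 3) * X) * (1 - C (p ^ 4) * X)
        * (1 + C (p + p ^ 2 + p ^ 3 + p ^ 4) * X + C (p ^ 5) * X ^ 2) := by
    simp only [map_add, map_mul, map_pow, map_ofNat]
    ring
  refine ⟨?_, key⟩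
  have h111 := sym3 1
  have h222 := sym3 2
  have h333 := sym3 3
  norm_num at h111 h222 h333
  have e2 : sym 2 1 1 / p + (p ^ 2 + p + 1) * sym 1 1 1 / p ^ 2 + sym 1 1 0 / p
      = p ^ 8 + p ^ 7 + 2 * p ^ 6 + p ^ 5 + 2 * p ^ 4 + p ^ 3 + p ^ 2 := by
    rw [hs211, h111, hs110]; field_simp; ring
  have e3 : ((p + 1) / p ^ 2) * (sym 2 2 2 + sym 2 2 1 + sym 2 1 1 + sym 1 1 1)
      = p ^ 11 + 2 * p ^ 10 + 2 * p ^ 9 + 3 * p ^ 8 + 3 * p ^ 7 + 2 * p ^ 6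
          + 2 * p ^ 5 + p ^ 4 := by
    rw [h222, hs221, hs211, h111]; field_simp; ring
  have e4 : sym 3 2 2 / p ^ 2 + (p ^ 2 + p + 1) * sym 2 2 2 / p ^ 3 + sym 2 2 1 / p ^ 2
      = p ^ 13 + p ^ 12 + 2 * p ^ 11 + p ^ 10 + 2 * p ^ 9 + p ^ 8 + p ^ 7 := by
    rw [hs322, h222, hs221]; field_simp; ring
  have e6 : sym 3 3 3 / p ^ 3 = p ^ 15 := by
    rw [h333]; field_simp
  rw [e2, e3, e4, e6]
  exact key
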